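/- arXiv:1512.07797 — 2 statements merged into one kernel-verified Lean document; each statement's English description precedes it below -/
import Mathlib

section
/- Let l : 2^V → ℝ be increasing with l(∅) = 0 and l(A) ≥ 0 for all A ⊆ V. Then there exists a scalar γ > 0 such that the margin-rescaling surrogate of the rescaled function γ·l is an extension of γ·l, i.e. for every A ⊆ V, max_{I ⊆ V} ( γ l(I) − 2 Σ_{i∈I} (1 − (1_A)_i) ) = γ l(A). -/
open Finset

/-- The chain {σ₁,…,σⱼ}: the image under σ of the first j indices. -/
def chainSet {p : ℕ} (σ : Equiv.Perm (Fin p)) (j : ℕ) : Finset (Fin p) :=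
  (Finset.univ.filter fun k : Fin p => (k : ℕ) < j).image σ

/-- G_l(σ, s) = Σ_{j=1}^p s_{σ_j}·(l({σ₁,…,σⱼ}) − l({σ₁,…,σ_{j−1}})). -/
def lovaszSum {p : ℕ} (l : Finset (Fin p) → ℝ) (σ : Equiv.Perm (Fin p))
    (s : Fin p → ℝ) : ℝ :=
  ∑ j : Fin p, s (σ j) * (l (chainSet σ ((j : ℕ) + 1)) - l (chainSet σ (j : ℕ)))

/-- Indicator vector 1_A ∈ {0,1}^p of A ⊆ V. -/
def indic {p : ℕ} (A : Finset (Fin p)) : Fin p → ℝ := fun i => if i ∈ A then 1 else 0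

/-- A permutation sorting s in decreasing order: s_{π_1} ≥ … ≥ s_{π_p}. -/
def SortsDesc {p : ℕ} (π : Equiv.Perm (Fin p)) (s : Fin p → ℝ) : Prop :=
  ∀ j k : Fin p, j ≤ k → s (π k) ≤ s (π j)

/-- A canonical permutation sorting s in decreasing order. -/
noncomputable def sortDesc {p : ℕ} (s : Fin p → ℝ) : Equiv.Perm (Fin p) :=
  Tuple.sort (fun i => -s i)

/-- The Lovász extension ℓ̂(s) = G_l(π, s) for a permutation π sorting s
decreasingly (independent of the choice of such π). -/
noncomputable def lovaszExt {p : ℕ} (l : Finset (Fin p) → ℝ) (s : Fin p → ℝ) : ℝ :=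
  lovaszSum l (sortDesc s) s

/-- Submodularity: l(A) + l(B) ≥ l(A ∪ B) + l(A ∩ B). -/
def Submodular {p : ℕ} (l : Finset (Fin p) → ℝ) : Prop :=
  ∀ A B : Finset (Fin p), l (A ∪ B) + l (A ∩ B) ≤ l A + l B

/-- The slack-rescaling surrogate S_l(s) = max_{I⊆V} l(I)·(1 − 2 Σ_{i∈I}(1 − s_i)). -/
noncomputable def slackSur {p : ℕ} (l : Finset (Fin p) → ℝ) (s : Fin p → ℝ) : ℝ :=
  Finset.univ.sup' Finset.univ_nonempty
    (fun I : Finset (Fin p) => l I * (1 - 2 * ∑ i ∈ I, (1 - s i)))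

/-- The margin-rescaling surrogate M_l(s) = max_{I⊆V} ( l(I) − 2 Σ_{i∈I}(1 − s_i) ). -/
noncomputable def marginSur {p : ℕ} (l : Finset (Fin p) → ℝ) (s : Fin p → ℝ) : ℝ :=
  Finset.univ.sup' Finset.univ_nonempty
    (fun I : Finset (Fin p) => l I - 2 * ∑ i ∈ I, (1 - s i))

/-- The Lovász hinge, general (non-monotonic) case. -/
noncomputable def hingeGen {p : ℕ} (l : Finset (Fin p) → ℝ) (s : Fin p → ℝ) : ℝ :=
  Finset.univ.sup' Finset.univ_nonempty
    (fun σ : Equiv.Perm (Fin p) => max 0 (lovaszSum l σ s))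

/-- The Lovász hinge, increasing case (componentwise thresholding). -/
noncomputable def hingeInc {p : ℕ} (l : Finset (Fin p) → ℝ) (s : Fin p → ℝ) : ℝ :=
  Finset.univ.sup' Finset.univ_nonempty
    (fun σ : Equiv.Perm (Fin p) =>
      ∑ j : Fin p, max (s (σ j)) 0 *
        (l (chainSet σ ((j : ℕ) + 1)) - l (chainSet σ (j : ℕ))))

theorem sum_one_sub_indic {p : ℕ} (A I : Finset (Fin p)) :
    ∑ i ∈ I, (1 - indic A i) = (#(I \ A) : ℝ) := by
  rw [sdiff_eq_filter, card_filter, Nat.cast_sum]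
  exact sum_congr rfl fun i _ => by by_cases hi : i ∈ A <;> simp [indic, hi]

/-- Each element of `I \ A` costs a margin of 2, which outweighs any gain `l I - l A` once the
total variation of `l` is at most 2. -/
theorem marginSur_indic_of_monotone {p : ℕ} {l : Finset (Fin p) → ℝ} (hl : Monotone l)
    (hvar : l univ - l ∅ ≤ 2) (A : Finset (Fin p)) : marginSur l (indic A) = l A := by
  refine le_antisymm (sup'_le _ _ fun I _ => ?_) ?_
  · rw [sum_one_sub_indic]
    by_cases hIA : I ⊆ A
    · simpa [sdiff_eq_empty_iff_subset.mpr hIA] using hl hIA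
    · have hcard : (1 : ℝ) ≤ #(I \ A) := by
        exact_mod_cast card_pos.mpr (sdiff_nonempty.mpr hIA)
      have hI : l I ≤ l univ := hl (subset_univ I)
      have hA : l ∅ ≤ l A := hl (empty_subset A)
      linarith
  · exact le_sup'_of_le _ (mem_univ A) (by rw [sum_one_sub_indic]; simp)

theorem margin_rescaled_extension_exists_general (p : ℕ)
    (l : Finset (Fin p) → ℝ)
    (hinc : ∀ A B : Finset (Fin p), A ⊆ B → l A ≤ l B) :
    ∃ γ : ℝ, 0 < γ ∧
      ∀ A : Finset (Fin p), marginSur (fun I => γ * l I) (indic A) = γ * l A := by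
  have hl : Monotone l := fun A B => hinc A B
  have hvar : 0 ≤ l univ - l ∅ := sub_nonneg.mpr (hl (empty_subset univ))
  set γ := 1 / (1 + (l univ - l ∅))
  have hγ : 0 < γ := by positivity
  refine ⟨γ, hγ, marginSur_indic_of_monotone (hl.const_mul hγ.le) ?_⟩
  have hγvar : γ * (l univ - l ∅) ≤ 1 := by
    rw [div_mul_eq_mul_div, one_mul, div_le_one (by positivity)]
    linarith
  linarith

/-- for increasing nonnegative l there is γ > 0 such that margin
rescaling of γ·l is an extension of γ·l. -/
theorem margin_rescaled_extension_exists (p : ℕ) (hp : 1 ≤ p)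
    (l : Finset (Fin p) → ℝ) (h0 : l ∅ = 0) (hnn : ∀ A : Finset (Fin p), 0 ≤ l A)
    (hinc : ∀ A B : Finset (Fin p), A ⊆ B → l A ≤ l B) :
    ∃ γ : ℝ, 0 < γ ∧
      ∀ A : Finset (Fin p), marginSur (fun I => γ * l I) (indic A) = γ * l A :=
  margin_rescaled_extension_exists_general p l hinc
end

section
/- Let l : 2^V → ℝ be submodular with l(∅) = 0. Then for every s ∈ ℝ^p the Lovász extension equals the maximum of the permutation sums: ℓ̂(s) = max over all permutations σ of {1,…,p} of G_l(σ, s); equivalently, for every permutation σ and every permutation π sorting s in decreasing order, G_l(σ, s) ≤ G_l(π, s). -/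
open Finset

/-!
Write `w^σ` for the marginal-gain vector of the chain of `σ`, so that `G_l(σ, s) = ⟨s, w^σ⟩`.
Submodularity (diminishing returns along the chain of `σ`) gives `w^σ(B) ≤ l B - l ∅` for every
`B`, with equality on the chain sets of `σ` itself. Hence, along the chain of the sorting
permutation `π`, the prefix sums of `w^σ` are dominated by those of `w^π`, with equal totals, and
summation by parts against the decreasing sequence `s ∘ π` gives `⟨s, w^σ⟩ ≤ ⟨s, w^π⟩`.
-/

theorem Finset.sum_range_mul_nonneg_of_antitone {a b : ℕ → ℝ} {n : ℕ}
    (ha : ∀ k, k + 1 < n → a (k + 1) ≤ a k) (hb : ∀ k ≤ n, 0 ≤ ∑ i ∈ range k, b i)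
    (hbn : ∑ i ∈ range n, b i = 0) : 0 ≤ ∑ i ∈ range n, a i * b i := by
  have h := sum_range_by_parts a b n
  simp only [smul_eq_mul] at h
  rw [h, hbn, mul_zero, zero_sub, neg_nonneg]
  refine sum_nonpos fun k hk => ?_
  have hk : k + 1 < n := by rw [mem_range] at hk; omega
  exact mul_nonpos_of_nonpos_of_nonneg (sub_nonpos.2 (ha k hk)) (hb _ hk.le)

theorem Submodular.insert_sub_le {p : ℕ} {l : Finset (Fin p) → ℝ} (hl : Submodular l)
    {A B : Finset (Fin p)} (hAB : A ⊆ B) {x : Fin p} (hx : x ∉ B) :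
    l (insert x B) - l B ≤ l (insert x A) - l A := by
  have h := hl (insert x A) B
  rw [insert_union, union_eq_right.2 hAB, insert_inter_of_notMem hx, inter_eq_left.2 hAB] at h
  linarith

section ChainSet

variable {p : ℕ} (σ : Equiv.Perm (Fin p))

theorem mem_chainSet {x : Fin p} {m : ℕ} : x ∈ chainSet σ m ↔ (σ.symm x : ℕ) < m := by
  simp [chainSet, ← Equiv.eq_symm_apply]

@[simp]
theorem chainSet_zero : chainSet σ 0 = ∅ := by
  simp [chainSet]

@[simp]
theorem chainSet_self : chainSet σ p = univ := by
  ext x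
  simp [mem_chainSet]

theorem apply_notMem_chainSet {m : ℕ} (hm : m < p) : σ ⟨m, hm⟩ ∉ chainSet σ m := by
  simp [mem_chainSet]

theorem chainSet_succ {m : ℕ} (hm : m < p) :
    chainSet σ (m + 1) = insert (σ ⟨m, hm⟩) (chainSet σ m) := by
  ext x
  rw [mem_chainSet, mem_insert, mem_chainSet, ← Equiv.symm_apply_eq, Fin.ext_iff]
  dsimp only
  omega

theorem sum_chainSet_eq_sum_range {M : Type*} [AddCommMonoid M] (f : Fin p → M) (F : ℕ → M)
    (hF : ∀ k (hk : k < p), F k = f (σ ⟨k, hk⟩)) {m : ℕ} (hm : m ≤ p) :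
    ∑ i ∈ chainSet σ m, f i = ∑ k ∈ range m, F k := by
  induction m with
  | zero => simp
  | succ m ih =>
    rw [chainSet_succ σ hm, sum_insert (apply_notMem_chainSet σ hm), ih (by omega),
      sum_range_succ, hF m hm, add_comm]

end ChainSet

section GreedyWeight

variable {p : ℕ} (l : Finset (Fin p) → ℝ) (σ : Equiv.Perm (Fin p))

/-- Edmonds' greedy vector `w^σ`. -/
def greedyWeight (i : Fin p) : ℝ :=
  l (chainSet σ ((σ.symm i : ℕ) + 1)) - l (chainSet σ (σ.symm i))

theorem greedyWeight_apply (j : Fin p) :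
    greedyWeight l σ (σ j) = l (chainSet σ ((j : ℕ) + 1)) - l (chainSet σ j) := by
  simp [greedyWeight]

theorem lovaszSum_eq_sum_mul_greedyWeight (s : Fin p → ℝ) :
    lovaszSum l σ s = ∑ i, s i * greedyWeight l σ i := by
  rw [lovaszSum, ← Equiv.sum_comp σ (fun i => s i * greedyWeight l σ i)]
  simp only [greedyWeight_apply]

theorem sum_greedyWeight_chainSet {m : ℕ} (hm : m ≤ p) :
    ∑ i ∈ chainSet σ m, greedyWeight l σ i = l (chainSet σ m) - l ∅ := by
  rw [sum_chainSet_eq_sum_range σ _ (fun k => l (chainSet σ (k + 1)) - l (chainSet σ k))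
    (fun k hk => (greedyWeight_apply l σ ⟨k, hk⟩).symm) hm,
    sum_range_sub (fun k => l (chainSet σ k)), chainSet_zero]

theorem sum_greedyWeight_univ : ∑ i, greedyWeight l σ i = l univ - l ∅ := by
  simpa using sum_greedyWeight_chainSet l σ le_rfl

variable {l}

theorem sum_greedyWeight_inter_chainSet_le (hl : Submodular l) (B : Finset (Fin p)) {m : ℕ}
    (hm : m ≤ p) : ∑ i ∈ B ∩ chainSet σ m, greedyWeight l σ i ≤ l (B ∩ chainSet σ m) - l ∅ := by
  induction m with
  | zero => simp
  | succ m ih =>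
    have hm' : m < p := by omega
    set x := σ ⟨m, hm'⟩
    have hx : x ∉ chainSet σ m := apply_notMem_chainSet σ hm'
    rw [chainSet_succ σ hm']
    by_cases hxB : x ∈ B
    · have hgain := hl.insert_sub_le (inter_subset_right (s₁ := B)) hx
      rw [← chainSet_succ σ hm'] at hgain
      have hx_gain : greedyWeight l σ x = l (chainSet σ (m + 1)) - l (chainSet σ m) :=
        greedyWeight_apply l σ ⟨m, hm'⟩
      rw [inter_insert_of_mem hxB, sum_insert fun h => hx (mem_inter.1 h).2]
      linarith [ih hm'.le]
    · rw [inter_insert_of_notMem hxB]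
      exact ih hm'.le

theorem sum_greedyWeight_le (hl : Submodular l) (B : Finset (Fin p)) :
    ∑ i ∈ B, greedyWeight l σ i ≤ l B - l ∅ := by
  simpa using sum_greedyWeight_inter_chainSet_le σ hl B le_rfl

end GreedyWeight

theorem SortsDesc.sum_mul_le_sum_mul {p : ℕ} {π : Equiv.Perm (Fin p)} {s : Fin p → ℝ}
    (hπ : SortsDesc π s) {v w : Fin p → ℝ}
    (hle : ∀ m ≤ p, ∑ i ∈ chainSet π m, v i ≤ ∑ i ∈ chainSet π m, w i)
    (heq : ∑ i, v i = ∑ i, w i) : ∑ i, s i * v i ≤ ∑ i, s i * w i := by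
  set a : ℕ → ℝ := fun k => if hk : k < p then s (π ⟨k, hk⟩) else 0
  set b : ℕ → ℝ := fun k => if hk : k < p then w (π ⟨k, hk⟩) - v (π ⟨k, hk⟩) else 0
  have hb : ∀ m ≤ p, ∑ k ∈ range m, b k = ∑ i ∈ chainSet π m, (w i - v i) := fun m hm =>
    (sum_chainSet_eq_sum_range π _ b (fun k hk => dif_pos hk) hm).symm
  have ha : ∀ k, k + 1 < p → a (k + 1) ≤ a k := fun k hk => by
    simpa [a, hk, (by omega : k < p)] using hπ ⟨k, by omega⟩ ⟨k + 1, hk⟩ (Fin.mk_le_mk.2 k.le_succ)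
  have key := sum_range_mul_nonneg_of_antitone ha
    (fun m hm => by rw [hb m hm, sum_sub_distrib]; linarith [hle m hm])
    (by rw [hb p le_rfl, chainSet_self, sum_sub_distrib, heq, sub_self])
  rw [← sum_chainSet_eq_sum_range π (fun i => s i * (w i - v i)) _
    (fun k hk => by simp [a, b, hk]) le_rfl, chainSet_self] at key
  simpa [mul_sub] using key

theorem lovasz_eq_max_over_permutations_general (p : ℕ)
    (l : Finset (Fin p) → ℝ) (hsub : Submodular l)
    (s : Fin p → ℝ) (π : Equiv.Perm (Fin p)) (hπ : SortsDesc π s) :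
    ∀ σ : Equiv.Perm (Fin p), lovaszSum l σ s ≤ lovaszSum l π s := by
  intro σ
  rw [lovaszSum_eq_sum_mul_greedyWeight, lovaszSum_eq_sum_mul_greedyWeight]
  refine hπ.sum_mul_le_sum_mul (fun m hm => ?_) ?_
  · rw [sum_greedyWeight_chainSet l π hm]
    exact sum_greedyWeight_le σ hsub _
  · rw [sum_greedyWeight_univ, sum_greedyWeight_univ]

/-- the Lovász extension is the maximum over permutations of the
permutation sums: for every permutation σ and every permutation π sorting s in
decreasing order, G_l(σ, s) ≤ G_l(π, s). -/
theorem lovasz_eq_max_over_permutations (p : ℕ) (hp : 1 ≤ p)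
    (l : Finset (Fin p) → ℝ) (hsub : Submodular l) (h0 : l ∅ = 0)
    (s : Fin p → ℝ) (π : Equiv.Perm (Fin p)) (hπ : SortsDesc π s) :
    ∀ σ : Equiv.Perm (Fin p), lovaszSum l σ s ≤ lovaszSum l π s :=
  lovasz_eq_max_over_permutations_general p l hsub s π hπ
end
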